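/- arXiv:1907.00290 — 3 statements merged into one kernel-verified Lean document; each statement's English description precedes it below -/
import Mathlib

section
/- Let $0<\alpha<1$ and $\beta = 1-\alpha$. For all real $x > 1$, one has $x + \beta(x+1)(x-1) - x^{1+\alpha\beta} > 0$. -/
theorem Real.rpow_one_add_le_self_add_mul {x p : ℝ} (hx : 0 ≤ x) (hp0 : 0 ≤ p) (hp1 : p ≤ 1) :
    x ^ (1 + p) ≤ x + p * x * (x - 1) := by
  have bernoulli : x ^ p ≤ 1 + p * (x - 1) := by
    simpa using rpow_one_add_le_one_add_mul_self (s := x - 1) (by linarith) hp0 hp1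
  calc x ^ (1 + p) = x * x ^ p := by
        rcases hx.eq_or_lt with rfl | hx
        · simp [Real.zero_rpow (by linarith : 1 + p ≠ 0)]
        · rw [Real.rpow_add hx, Real.rpow_one]
    _ ≤ x * (1 + p * (x - 1)) := mul_le_mul_of_nonneg_left bernoulli hx
    _ = x + p * x * (x - 1) := by ring

theorem stmt_0 (α : ℝ) (hα0 : 0 < α) (hα1 : α < 1) (β : ℝ) (hβ : β = 1 - α)
    (x : ℝ) (hx : 1 < x) :
    0 < x + β * (x + 1) * (x - 1) - x ^ (1 + α * β) := by
  have hβ0 : 0 < β := by linarith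
  have hαβ : α * β ≤ β := by nlinarith
  have key : x ^ (1 + α * β) < x + β * (x + 1) * (x - 1) :=
    calc x ^ (1 + α * β) ≤ x ^ (1 + β) := Real.rpow_le_rpow_of_exponent_le hx.le (by linarith)
      _ ≤ x + β * x * (x - 1) := Real.rpow_one_add_le_self_add_mul (by linarith) hβ0.le (by linarith)
      _ < x + β * (x + 1) * (x - 1) := by nlinarith
  linarith
end

section
/- Let $0<\alpha<1$, $\beta=1-\alpha$, and define $g(x) = \int_0^x t^{-\alpha}(1+t)^{-1}\,dt$ and $G(x) = g(x) - x^{\beta(\beta+1)} g(1/x)$ for $x > 0$. Then $G(x) < 0$ for all $x > 1$. -/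
open Real MeasureTheory Set intervalIntegral

/-!
Since `G 1 = 0`, it suffices that `G' < 0` on `(1, ∞)`. With `c = β(β+1)` and `u = 1/y < 1`,
`G'(y) = y^(c-1) * ((u^(β²+1) + u^β) / (1 + u) - c g(u))`. The bound `1/(1+t) ≥ 1 - t` gives
`c g(u) ≥ u^β (β + 1 - β u)`, which reduces `G'(y) < 0` to
`u^(1-αβ) + 1 < (1 + u)(β + 1 - β u)`. Bernoulli's inequality `u^(1-αβ) ≤ 1 - αβ(1 - u)` leaves
the gap `β(1 - u)(β + u) > 0`.
-/

noncomputable def integrand (α t : ℝ) : ℝ := t ^ (-α) * (1 + t)⁻¹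

lemma continuousOn_integrand (α : ℝ) : ContinuousOn (integrand α) (Ioi 0) :=
  (continuousOn_id.rpow_const fun _ ht => Or.inl (ne_of_gt ht)).mul <|
    (continuousOn_const.add continuousOn_id).inv₀ fun t ht =>
      (by linarith [show (0 : ℝ) < t from ht] : (0 : ℝ) < 1 + t).ne'

lemma intervalIntegrable_integrand {α b : ℝ} (hα : α < 1) (hb : 0 ≤ b) :
    IntervalIntegrable (integrand α) volume 0 b := by
  refine (intervalIntegrable_rpow' (r := -α) (by linarith)).mono_fun ?_ ?_
  · refine ((continuousOn_integrand α).mono ?_).aestronglyMeasurable measurableSet_uIoc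
    rw [uIoc_of_le hb]
    exact Ioc_subset_Ioi_self
  · rw [Filter.EventuallyLE, ae_restrict_iff' measurableSet_uIoc]
    filter_upwards with t ht
    rw [uIoc_of_le hb] at ht
    have hpow : 0 ≤ t ^ (-α) := rpow_nonneg ht.1.le _
    have hinv₀ : 0 ≤ (1 + t)⁻¹ := inv_nonneg.2 (by linarith [ht.1])
    have hinv : (1 + t)⁻¹ ≤ 1 := inv_le_one_of_one_le₀ (by linarith [ht.1])
    rw [integrand, norm_of_nonneg (mul_nonneg hpow hinv₀), norm_of_nonneg hpow]
    exact mul_le_of_le_one_right hpow hinv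

lemma hasDerivAt_integral_integrand {α y : ℝ} (hα : α < 1) (hy : 0 < y) :
    HasDerivAt (fun x => ∫ t in Ioc 0 x, integrand α t) (integrand α y) y := by
  have hmeas : StronglyMeasurableAtFilter (integrand α) (nhds y) volume :=
    ⟨Ioi 0, Ioi_mem_nhds hy, (continuousOn_integrand α).aestronglyMeasurable measurableSet_Ioi⟩
  refine (integral_hasDerivAt_right (intervalIntegrable_integrand hα hy.le) hmeas
    ((continuousOn_integrand α).continuousAt (Ioi_mem_nhds hy))).congr_of_eventuallyEq ?_
  filter_upwards [Ioi_mem_nhds hy] with z hz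
  rw [integral_of_le (le_of_lt hz)]

lemma sub_le_integral_integrand {β u : ℝ} (hβ : 0 < β) (hu : 0 < u) :
    u ^ β / β - u ^ (β + 1) / (β + 1) ≤ ∫ t in Ioc 0 u, integrand (1 - β) t := by
  have h1 : IntervalIntegrable (fun t : ℝ => t ^ (β - 1)) volume 0 u :=
    intervalIntegrable_rpow' (by linarith)
  have h2 : IntervalIntegrable (fun t : ℝ => t ^ β) volume 0 u :=
    intervalIntegrable_rpow' (by linarith)
  have hprim : ∫ t in (0 : ℝ)..u, (t ^ (β - 1) - t ^ β) = u ^ β / β - u ^ (β + 1) / (β + 1) := by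
    rw [integral_sub h1 h2, integral_rpow (Or.inl (by linarith)),
      integral_rpow (Or.inl (by linarith)), sub_add_cancel,
      zero_rpow hβ.ne', zero_rpow (by linarith : β + 1 ≠ 0)]
    ring
  rw [← hprim, ← integral_of_le hu.le]
  refine integral_mono_on hu.le (h1.sub h2) (intervalIntegrable_integrand (by linarith) hu.le)
    fun t ht => ?_
  have ht0 : 0 ≤ t := ht.1
  have hinv : 1 - t ≤ (1 + t)⁻¹ := by
    rw [← one_div, le_div_iff₀ (by linarith)]
    nlinarith
  calc t ^ (β - 1) - t ^ β = t ^ (β - 1) * (1 - t) := by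
        rw [mul_one_sub, ← rpow_add_one' ht0 (by simpa using hβ.ne'), sub_add_cancel]
    _ ≤ integrand (1 - β) t := by
        rw [integrand, neg_sub]
        exact mul_le_mul_of_nonneg_left hinv (rpow_nonneg ht0 _)

lemma rpow_add_one_lt_mul {β u : ℝ} (hβ0 : 0 < β) (hβ1 : β ≤ 1) (hu0 : 0 < u) (hu1 : u < 1) :
    u ^ (1 - β * (1 - β)) + 1 < (1 + u) * (β + 1 - β * u) := by
  have hbern := rpow_one_add_le_one_add_mul_self (s := u - 1) (by linarith)
    (p := 1 - β * (1 - β)) (by nlinarith) (by nlinarith)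
  rw [add_sub_cancel] at hbern
  nlinarith [mul_pos (mul_pos hβ0 (sub_pos.2 hu1)) (add_pos hβ0 hu0)]

lemma rpow_add_rpow_div_lt {β u : ℝ} (hβ0 : 0 < β) (hβ1 : β ≤ 1) (hu0 : 0 < u) (hu1 : u < 1) :
    (u ^ (β ^ 2 + 1) + u ^ β) / (1 + u) <
      β * (β + 1) * (u ^ β / β - u ^ (β + 1) / (β + 1)) := by
  have hsplit : u ^ (β ^ 2 + 1) = u ^ β * u ^ (1 - β * (1 - β)) := by
    rw [← rpow_add hu0]; ring_nf
  have hrhs : β * (β + 1) * (u ^ β / β - u ^ (β + 1) / (β + 1)) = u ^ β * (β + 1 - β * u) := by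
    rw [rpow_add_one hu0.ne']; field_simp
  rw [hsplit, hrhs, div_lt_iff₀ (by linarith)]
  linear_combination (mul_lt_mul_of_pos_left (rpow_add_one_lt_mul hβ0 hβ1 hu0 hu1)
    (rpow_pos_of_pos hu0 β))

lemma integrand_sub_rpow_mul_lt_zero {β y v : ℝ} (hβ0 : 0 < β) (hβ1 : β ≤ 1) (hy : 1 < y)
    (hv : y⁻¹ ^ β / β - y⁻¹ ^ (β + 1) / (β + 1) ≤ v) :
    integrand (1 - β) y - (β * (β + 1) * y ^ (β * (β + 1) - 1) * v
      + y ^ (β * (β + 1)) * (integrand (1 - β) y⁻¹ * -(y ^ 2)⁻¹)) < 0 := by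
  obtain ⟨u, hu0, hu1, rfl⟩ : ∃ u, 0 < u ∧ u < 1 ∧ y = u⁻¹ :=
    ⟨y⁻¹, by positivity, inv_lt_one_of_one_lt₀ hy, (inv_inv y).symm⟩
  rw [inv_inv] at hv ⊢
  have hinv_rpow : ∀ a : ℝ, u⁻¹ ^ a = u ^ (-a) := fun a => by rw [inv_rpow hu0.le, rpow_neg hu0.le]
  have e1 : integrand (1 - β) u⁻¹ = u ^ (1 - β * (β + 1)) * u ^ (β ^ 2 + 1) / (1 + u) := by
    rw [integrand, hinv_rpow, neg_neg, ← rpow_add hu0,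
      show 1 - β * (β + 1) + (β ^ 2 + 1) = (1 - β) + 1 by ring, rpow_add_one hu0.ne']
    field_simp
    ring
  have e2 : u⁻¹ ^ (β * (β + 1)) * (integrand (1 - β) u * -(u⁻¹ ^ 2)⁻¹) =
      -(u ^ (1 - β * (β + 1)) * u ^ β / (1 + u)) := by
    have h : u ^ (-(β * (β + 1))) * u ^ (-(1 - β)) * u ^ 2 = u ^ (1 - β * (β + 1)) * u ^ β := by
      rw [← rpow_natCast, ← rpow_add hu0, ← rpow_add hu0, ← rpow_add hu0]
      ring_nf
    rw [hinv_rpow, inv_pow, inv_inv, integrand]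
    linear_combination (-(1 + u)⁻¹) * h
  rw [e1, e2, hinv_rpow, neg_sub]
  have key : (u ^ (β ^ 2 + 1) + u ^ β) / (1 + u) - β * (β + 1) * v < 0 :=
    sub_neg.2 <| (rpow_add_rpow_div_lt hβ0 hβ1 hu0 hu1).trans_le <|
      mul_le_mul_of_nonneg_left hv (by positivity)
  linear_combination mul_neg_of_pos_of_neg (rpow_pos_of_pos hu0 (1 - β * (β + 1))) key

theorem stmt_2 (α : ℝ) (hα0 : 0 < α) (hα1 : α < 1) (β : ℝ) (hβ : β = 1 - α)
    (g G : ℝ → ℝ) (hg : ∀ x > (0:ℝ), g x = ∫ t in Set.Ioc (0:ℝ) x, t ^ (-α) * (1 + t)⁻¹)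
    (hG : ∀ x > (0:ℝ), G x = g x - x ^ (β * (β + 1)) * g (1 / x))
    (x : ℝ) (hx : 1 < x) :
    G x < 0 := by
  obtain rfl : α = 1 - β := by linarith
  have hg_ge : ∀ u > 0, u ^ β / β - u ^ (β + 1) / (β + 1) ≤ g u := fun u hu =>
    (hg u hu).symm ▸ sub_le_integral_integrand (by linarith) hu
  have hg' : ∀ y > 0, HasDerivAt g (integrand (1 - β) y) y := fun y hy =>
    (hasDerivAt_integral_integrand (by linarith) hy).congr_of_eventuallyEq <|
      Filter.eventually_of_mem (Ioi_mem_nhds hy) fun z hz => hg z hz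
  have hG' : ∀ y > 0, HasDerivAt G (integrand (1 - β) y - (β * (β + 1) * y ^ (β * (β + 1) - 1)
      * g y⁻¹ + y ^ (β * (β + 1)) * (integrand (1 - β) y⁻¹ * -(y ^ 2)⁻¹))) y := fun y hy =>
    ((hg' y hy).sub ((hasDerivAt_rpow_const (Or.inl hy.ne')).mul
      ((hg' y⁻¹ (inv_pos.2 hy)).comp y (hasDerivAt_inv hy.ne')))).congr_of_eventuallyEq <|
      Filter.eventually_of_mem (Ioi_mem_nhds hy) fun z hz => by simp [hG z hz]
  have hanti : StrictAntiOn G (Ici 1) := by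
    refine strictAntiOn_of_deriv_neg (convex_Ici 1)
      (fun y hy => (hG' y (one_pos.trans_le hy)).continuousAt.continuousWithinAt) fun y hy => ?_
    rw [interior_Ici, mem_Ioi] at hy
    rw [(hG' y (one_pos.trans hy)).deriv]
    exact integrand_sub_rpow_mul_lt_zero (by linarith) (by linarith) hy
      (hg_ge _ (inv_pos.2 (one_pos.trans hy)))
  have hG1 : G 1 = 0 := by simp [hG 1 one_pos]
  simpa [hG1] using hanti (mem_Ici.2 le_rfl) hx.le hx
end

section
/- Let $T$ be a nonnegative random variable with $P(T > t) = L(t)t^{-\alpha}$ for all $t>0$, where $0<\alpha<1$ and $L$ is slowly varying (i.e., $L(ct)/L(t) \to 1$ as $t\to\infty$ for every $c>0$). Then for every $\epsilon > 0$ there exists $\hat t > 0$ such that for all $t > \hat t$ and all $s > 0$: $P(T > s+t \mid T > s) \geq t^{-(\alpha+\epsilon)}$. -/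
/-!
Write `g u = P(T > u)`. Slow variation gives `g (2t) ≥ 2^(-γ) g t` for large `t`, where
`γ = α + ε/2`; iterating this doubling bound yields the polynomial lower bound
`g t ≥ C t^(-γ)`. For `s ≤ t` the latter gives `g (s + t) ≥ g (2t) ≥ C (2t)^(-γ) ≥ t^(-(α+ε))`,
while for `s > t` the doubling bound gives `g (s + t) ≥ g (2s) ≥ 2^(-γ) g s ≥ t^(-(α+ε)) g s`.
-/

open MeasureTheory Filter Real Topology

theorem Filter.Eventually.exists_pos_forall_ge {p : ℝ → Prop} (h : ∀ᶠ t in atTop, p t) :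
    ∃ T > 0, ∀ t ≥ T, p t := by
  obtain ⟨T, hT⟩ := eventually_atTop.mp ((eventually_gt_atTop 0).and h)
  exact ⟨T, (hT T le_rfl).1, fun t ht => (hT t ht).2⟩

theorem eventually_rpow_neg_mul_le_comp_mul_of_slowlyVarying {g L : ℝ → ℝ} {c α γ : ℝ}
    (hc : 1 < c) (hαγ : α < γ) (hLpos : ∀ t > 0, 0 < L t)
    (hL : Tendsto (fun t => L (c * t) / L t) atTop (𝓝 1))
    (hg : ∀ t > 0, g t = L t * t ^ (-α)) :
    ∀ᶠ t in atTop, c ^ (-γ) * g t ≤ g (c * t) := by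
  have hc0 : 0 < c := one_pos.trans hc
  have hratio : ∀ᶠ t in atTop, c ^ (α - γ) ≤ L (c * t) / L t :=
    hL.eventually (eventually_ge_nhds (rpow_lt_one_of_one_lt_of_neg hc (by linarith)))
  filter_upwards [hratio, eventually_gt_atTop 0] with t hle ht
  have hLt := hLpos t ht
  rw [le_div_iff₀ hLt] at hle
  calc c ^ (-γ) * g t = c ^ (α - γ) * L t * (c ^ (-α) * t ^ (-α)) := by
        rw [hg t ht, show -γ = (α - γ) + -α by ring, rpow_add hc0]; ring
    _ ≤ L (c * t) * (c ^ (-α) * t ^ (-α)) := by gcongr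
    _ = g (c * t) := by rw [hg (c * t) (by positivity), mul_rpow hc0.le ht.le]

namespace Antitone

variable {g : ℝ → ℝ}

theorem mul_div_rpow_neg_le (hg : Antitone g) {a β T₀ : ℝ} (ha : 1 < a) (hβ : 0 ≤ β)
    (hT₀ : 0 < T₀) (hgT₀ : 0 ≤ g T₀) (hscale : ∀ t ≥ T₀, a ^ (-β) * g t ≤ g (a * t))
    {t : ℝ} (ht : T₀ ≤ t) : g T₀ * (a * t / T₀) ^ (-β) ≤ g t := by
  have ha0 : 0 < a := one_pos.trans ha
  have hsmall : ∀ t, T₀ ≤ t → t ≤ a * T₀ → g T₀ * (a * t / T₀) ^ (-β) ≤ g t := by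
    intro t h₁ h₂
    have ha_le : a ≤ a * t / T₀ := by rw [le_div_iff₀ hT₀]; gcongr
    calc g T₀ * (a * t / T₀) ^ (-β) ≤ g T₀ * a ^ (-β) :=
          mul_le_mul_of_nonneg_left (rpow_le_rpow_of_nonpos ha0 ha_le (by linarith)) hgT₀
      _ ≤ g (a * T₀) := by rw [mul_comm]; exact hscale T₀ le_rfl
      _ ≤ g t := hg h₂
  have hbounded : ∀ n : ℕ, ∀ t, T₀ ≤ t → t ≤ a ^ n * T₀ →
      g T₀ * (a * t / T₀) ^ (-β) ≤ g t := by
    intro n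
    induction n with
    | zero => exact fun t h₁ h₂ => hsmall t h₁ (by nlinarith)
    | succ n ih =>
      intro t h₁ h₂
      rcases le_or_gt t (a * T₀) with hle | hgt
      · exact hsmall t h₁ hle
      · have hu₁ : T₀ ≤ t / a := by rw [le_div_iff₀ ha0]; linarith
        have hu₂ : t / a ≤ a ^ n * T₀ := by
          rw [div_le_iff₀ ha0]; linarith [show a ^ (n + 1) * T₀ = a ^ n * T₀ * a by ring]
        have hta : a * (t / a) = t := by field_simp
        calc g T₀ * (a * t / T₀) ^ (-β)
            = a ^ (-β) * (g T₀ * (a * (t / a) / T₀) ^ (-β)) := by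
              rw [show a * t / T₀ = a * (a * (t / a) / T₀) by rw [hta]; ring,
                mul_rpow ha0.le (by have := hT₀.trans_le hu₁; positivity)]
              ring
          _ ≤ a ^ (-β) * g (t / a) := by gcongr; exact ih _ hu₁ hu₂
          _ ≤ g (a * (t / a)) := hscale _ hu₁
          _ = g t := by rw [hta]
  obtain ⟨n, hn⟩ := pow_unbounded_of_one_lt (t / T₀) ha
  exact hbounded n t ht (by rw [div_lt_iff₀ hT₀] at hn; linarith)

theorem eventually_rpow_neg_mul_le_comp_add (hg : Antitone g) (hg0 : ∀ u, 0 ≤ g u)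
    (hg1 : ∀ u, g u ≤ 1) {β γ T₀ : ℝ} (hγ : 0 ≤ γ) (hγβ : γ < β) (hT₀ : 0 < T₀)
    (hgT₀ : 0 < g T₀) (hdouble : ∀ t ≥ T₀, 2 ^ (-γ) * g t ≤ g (2 * t)) :
    ∀ᶠ t in atTop, ∀ s, t ^ (-β) * g s ≤ g (s + t) := by
  set C := g T₀ * (4 / T₀) ^ (-γ)
  have hC : 0 < C := by positivity
  have hdecay : ∀ᶠ t in atTop, t ^ (γ - β) ≤ C :=
    (tendsto_rpow_neg_atTop (by linarith : 0 < β - γ)).eventually (eventually_le_nhds hC)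
      |>.mono fun t ht => by rwa [neg_sub] at ht
  have hsmall : ∀ᶠ t in atTop, t ^ (-β) ≤ (2 : ℝ) ^ (-γ) :=
    (tendsto_rpow_neg_atTop (by linarith : 0 < β)).eventually
      (eventually_le_nhds (by positivity))
  filter_upwards [hdecay, hsmall, eventually_ge_atTop T₀] with t hdecay hsmall ht s
  have ht0 : 0 < t := hT₀.trans_le ht
  rcases le_or_gt s t with hst | hts
  · calc t ^ (-β) * g s ≤ t ^ (-β) := mul_le_of_le_one_right (by positivity) (hg1 s)
      _ = t ^ (γ - β) * t ^ (-γ) := by rw [← rpow_add ht0]; ring_nf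
      _ ≤ C * t ^ (-γ) := by gcongr
      _ = g T₀ * (2 * (2 * t) / T₀) ^ (-γ) := by
        rw [show 2 * (2 * t) / T₀ = 4 / T₀ * t by ring, mul_rpow (by positivity) ht0.le]
        ring
      _ ≤ g (2 * t) := hg.mul_div_rpow_neg_le one_lt_two hγ hT₀ hgT₀.le hdouble (by linarith)
      _ ≤ g (s + t) := hg (by linarith)
  · calc t ^ (-β) * g s ≤ 2 ^ (-γ) * g s := mul_le_mul_of_nonneg_right hsmall (hg0 s)
      _ ≤ g (2 * s) := hdouble s (by linarith)
      _ ≤ g (s + t) := hg (by linarith)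

end Antitone

theorem stmt_6_general (α : ℝ) (hα : α ∈ Set.Ioo (0:ℝ) 1)
    (L : ℝ → ℝ) (hLpos : ∀ t > (0:ℝ), 0 < L t)
    (hL : ∀ c > (0:ℝ), Tendsto (fun t => L (c * t) / L t) atTop (nhds 1))
    (Ω : Type*) [MeasurableSpace Ω] (P : Measure Ω) [IsProbabilityMeasure P]
    (T : Ω → ℝ)
    (htail : ∀ t > (0:ℝ), (P {ω | T ω > t}).toReal = L t * t ^ (-α))
    (ε : ℝ) (hε : 0 < ε) :
    ∃ tHat > (0:ℝ), ∀ t > tHat, ∀ s > (0:ℝ),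
      (P {ω | T ω > s + t}).toReal / (P {ω | T ω > s}).toReal ≥ t ^ (-(α + ε)) := by
  set g : ℝ → ℝ := fun u => (P {ω | T ω > u}).toReal
  have hg : Antitone g := fun x y hxy =>
    ENNReal.toReal_mono (measure_ne_top _ _) (measure_mono fun ω h => hxy.trans_lt h)
  have hgpos : ∀ u > 0, 0 < g u := fun u hu => by
    have := hLpos u hu
    rw [show g u = _ from htail u hu]; positivity
  obtain ⟨T₀, hT₀, hdouble⟩ :=
    (eventually_rpow_neg_mul_le_comp_mul_of_slowlyVarying (γ := α + ε / 2) one_lt_two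
      (by linarith) hLpos (hL 2 two_pos) htail).exists_pos_forall_ge
  obtain ⟨tHat, htHat, hbound⟩ :=
    (hg.eventually_rpow_neg_mul_le_comp_add (β := α + ε) (fun _ => ENNReal.toReal_nonneg)
      (fun _ => measureReal_le_one) (by linarith [hα.1]) (by linarith) hT₀ (hgpos T₀ hT₀)
      hdouble).exists_pos_forall_ge
  refine ⟨tHat, htHat, fun t ht s hs => ?_⟩
  rw [ge_iff_le, le_div_iff₀ (hgpos s hs)]
  exact hbound t ht.le s

theorem stmt_6 (α : ℝ) (hα : α ∈ Set.Ioo (0:ℝ) 1)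
    (L : ℝ → ℝ) (hLpos : ∀ t > (0:ℝ), 0 < L t)
    (hL : ∀ c > (0:ℝ), Tendsto (fun t => L (c * t) / L t) atTop (nhds 1))
    (Ω : Type*) [MeasurableSpace Ω] (P : Measure Ω) [IsProbabilityMeasure P]
    (T : Ω → ℝ) (hmeas : Measurable T)
    (htail : ∀ t > (0:ℝ), (P {ω | T ω > t}).toReal = L t * t ^ (-α))
    (ε : ℝ) (hε : 0 < ε) :
    ∃ tHat > (0:ℝ), ∀ t > tHat, ∀ s > (0:ℝ),
      (P {ω | T ω > s + t}).toReal / (P {ω | T ω > s}).toReal ≥ t ^ (-(α + ε)) :=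
  stmt_6_general α hα L hLpos hL Ω P T htail ε hε
end
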